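/- The function X is 4μ₀-Lipschitz with respect to single edge changes: if G and G' are two graphs on the same n-vertex set that differ in exactly one edge (one is obtained from the other by adding or deleting a single edge), then |X(G) − X(G')| ≤ 4μ₀. -/

import Mathlib

open MeasureTheory Filter
open scoped ENNReal NNReal

/-- Bernoulli measure on `Bool` with success probability `p` (clipped to `[0,1]`). -/
noncomputable def bern (p : ℝ) : Measure Bool :=
  (PMF.bernoulli (min (Real.toNNReal p) 1) (min_le_right _ _)).toMeasure

instance (p : ℝ) : IsProbabilityMeasure (bern p) :=
  PMF.toMeasure.isProbabilityMeasure _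

/-- The Erdős–Rényi measure: each potential edge (pair of vertices) is present
independently with probability `p`. -/
noncomputable def gnp (n : ℕ) (p : ℝ) : Measure (Sym2 (Fin n) → Bool) :=
  Measure.pi fun _ => bern p

/-- The simple graph determined by an outcome `ω`. -/
def graphOf (n : ℕ) (ω : Sym2 (Fin n) → Bool) : SimpleGraph (Fin n) where
  Adj u v := u ≠ v ∧ ω s(u, v) = true
  symm := ⟨fun u v ⟨h, e⟩ => ⟨h.symm, by rwa [Sym2.eq_swap]⟩⟩
  loopless := ⟨fun u ⟨h, _⟩ => h rfl⟩

/-- `I` is an independent set of `G`. -/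
def IsIndepFinset {n : ℕ} (G : SimpleGraph (Fin n)) (I : Finset (Fin n)) : Prop :=
  ∀ u ∈ I, ∀ v ∈ I, ¬ G.Adj u v

/-- `k₀ = max {k : C(n,k) (1-p)^{C(k,2)} ≥ n⁴}`. -/
noncomputable def kZero (n : ℕ) (p : ℝ) : ℕ :=
  sSup {k : ℕ | ((n : ℝ)) ^ 4 ≤ (n.choose k : ℝ) * (1 - p) ^ k.choose 2}

/-- `μ = C(n,k₀) (1-p)^{C(k₀,2)}`, the expected number of independent sets of size `k₀`. -/
noncomputable def muA (n : ℕ) (p : ℝ) : ℝ :=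
  (n.choose (kZero n p) : ℝ) * (1 - p) ^ ((kZero n p).choose 2)

/-- `μ₀ = C(n-2,k₀-2) (1-p)^{C(k₀,2)}`, the expected number of independent sets of size `k₀`
containing a fixed pair of vertices. -/
noncomputable def muB (n : ℕ) (p : ℝ) : ℝ :=
  ((n - 2).choose (kZero n p - 2) : ℝ) * (1 - p) ^ ((kZero n p).choose 2)

/-- `Xvar n k c G` is the size of the largest collection of independent sets of size `k` in `G`
such that no pair of (distinct) vertices belongs to more than `c` of these sets. -/
noncomputable def Xvar (n k : ℕ) (c : ℝ) (G : SimpleGraph (Fin n)) : ℕ :=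
  sSup {m : ℕ | ∃ F : Finset (Finset (Fin n)),
    (∀ I ∈ F, I.card = k ∧ IsIndepFinset G I) ∧
    (∀ u v : Fin n, u ≠ v →
      (({I ∈ (F : Set (Finset (Fin n))) | u ∈ I ∧ v ∈ I}).ncard : ℝ) ≤ c) ∧
    F.card = m}

/-- The number of independent sets of size `k` in `G`. -/
noncomputable def Nindep (n k : ℕ) (G : SimpleGraph (Fin n)) : ℕ :=
  {I : Finset (Fin n) | I.card = k ∧ IsIndepFinset G I}.ncard

/-- The number of independent sets of size `k` in `G` containing both endpoints of `e`. -/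
noncomputable def Zpair (n k : ℕ) (G : SimpleGraph (Fin n)) (e : Sym2 (Fin n)) : ℕ :=
  {I : Finset (Fin n) | I.card = k ∧ IsIndepFinset G I ∧ ∀ x ∈ e, x ∈ I}.ncard

open Classical in
/-- `Z⁺ = ∑_{u,v} Z⁺_{u,v}` where `Z⁺_{u,v} = Z_{u,v}` if `Z_{u,v} > c` and `0` otherwise. -/
noncomputable def Zplus (n k : ℕ) (c : ℝ) (G : SimpleGraph (Fin n)) : ℕ :=
  ∑ e ∈ Finset.univ.filter (fun e : Sym2 (Fin n) => ¬ e.IsDiag),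
    if c < (Zpair n k G e : ℝ) then Zpair n k G e else 0

/-! Take a largest pair-bounded family of independent sets for `G` and discard the sets
containing both endpoints of the edge `e`. What remains is still independent in `G'`, since `e`
is the only edge `G'` has in addition to `G`, and at most `4μ₀` sets were discarded because `e`
is a pair of vertices. By symmetry in `G` and `G'` this bounds `|X(G) − X(G')|`. -/

def IsPairBoundedIndepFamily {n : ℕ} (k : ℕ) (c : ℝ) (G : SimpleGraph (Fin n))
    (F : Finset (Finset (Fin n))) : Prop :=
  (∀ I ∈ F, I.card = k ∧ IsIndepFinset G I) ∧
    ∀ u v : Fin n, u ≠ v →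
      (({I ∈ (F : Set (Finset (Fin n))) | u ∈ I ∧ v ∈ I}).ncard : ℝ) ≤ c

section

variable {n k : ℕ} {c : ℝ} {G G' : SimpleGraph (Fin n)} {F : Finset (Finset (Fin n))}

theorem Xvar_eq_sSup (n k : ℕ) (c : ℝ) (G : SimpleGraph (Fin n)) :
    Xvar n k c G = sSup {m | ∃ F, IsPairBoundedIndepFamily k c G F ∧ F.card = m} := by
  simp only [Xvar, IsPairBoundedIndepFamily, and_assoc]

theorem bddAbove_card_isPairBoundedIndepFamily (k : ℕ) (c : ℝ) (G : SimpleGraph (Fin n)) :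
    BddAbove {m | ∃ F, IsPairBoundedIndepFamily k c G F ∧ F.card = m} := by
  refine ⟨Fintype.card (Finset (Fin n)), ?_⟩
  rintro m ⟨F, -, rfl⟩
  exact F.card_le_univ

theorem isPairBoundedIndepFamily_empty (k : ℕ) (hc : 0 ≤ c) (G : SimpleGraph (Fin n)) :
    IsPairBoundedIndepFamily k c G ∅ :=
  ⟨by simp, fun _ _ _ => by simpa using hc⟩

theorem IsPairBoundedIndepFamily.card_le_Xvar (hF : IsPairBoundedIndepFamily k c G F) :
    F.card ≤ Xvar n k c G := by
  rw [Xvar_eq_sSup]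
  exact le_csSup (bddAbove_card_isPairBoundedIndepFamily k c G) ⟨F, hF, rfl⟩

theorem exists_isPairBoundedIndepFamily_card_eq_Xvar (k : ℕ) (hc : 0 ≤ c)
    (G : SimpleGraph (Fin n)) :
    ∃ F, IsPairBoundedIndepFamily k c G F ∧ F.card = Xvar n k c G := by
  rw [Xvar_eq_sSup]
  exact Nat.sSup_mem ⟨0, Set.mem_ofPred.mpr ⟨∅, isPairBoundedIndepFamily_empty k hc G, rfl⟩⟩
    (bddAbove_card_isPairBoundedIndepFamily k c G)

theorem IsPairBoundedIndepFamily.card_filter_both_mem_le (hF : IsPairBoundedIndepFamily k c G F)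
    {u v : Fin n} (huv : u ≠ v) : ((F.filter fun I => u ∈ I ∧ v ∈ I).card : ℝ) ≤ c := by
  rw [← Set.ncard_coe_finset, Finset.coe_filter]
  exact hF.2 u v huv

theorem IsIndepFinset.of_sdiff_subset_pair {I : Finset (Fin n)} {u v : Fin n}
    (hI : IsIndepFinset G I) (hG' : G'.edgeSet \ G.edgeSet ⊆ {s(u, v)})
    (huvI : ¬(u ∈ I ∧ v ∈ I)) : IsIndepFinset G' I := by
  intro a ha b hb hab
  by_cases hGab : G.Adj a b
  · exact hI a ha b hb hGab
  · have : s(a, b) = s(u, v) := hG' ⟨hab, hGab⟩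
    rcases Sym2.eq_iff.mp this with ⟨rfl, rfl⟩ | ⟨rfl, rfl⟩
    · exact huvI ⟨ha, hb⟩
    · exact huvI ⟨hb, ha⟩

theorem IsPairBoundedIndepFamily.filter_not_both_mem (hF : IsPairBoundedIndepFamily k c G F)
    {u v : Fin n} (hG' : G'.edgeSet \ G.edgeSet ⊆ {s(u, v)}) :
    IsPairBoundedIndepFamily k c G' (F.filter fun I => ¬(u ∈ I ∧ v ∈ I)) := by
  refine ⟨fun I hI => ?_, fun a b hab => (hF.2 a b hab).trans' ?_⟩
  · rw [Finset.mem_filter] at hI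
    obtain ⟨hIk, hIG⟩ := hF.1 I hI.1
    exact ⟨hIk, hIG.of_sdiff_subset_pair hG' hI.2⟩
  · refine Nat.cast_le.mpr (Set.ncard_le_ncard ?_ (Set.toFinite _))
    exact fun I hI => ⟨(Finset.mem_filter.mp hI.1).1, hI.2⟩

theorem Xvar_le_Xvar_add (hc : 0 ≤ c) {u v : Fin n} (huv : u ≠ v)
    (hG' : G'.edgeSet \ G.edgeSet ⊆ {s(u, v)}) :
    (Xvar n k c G : ℝ) ≤ Xvar n k c G' + c := by
  obtain ⟨F, hF, hFcard⟩ := exists_isPairBoundedIndepFamily_card_eq_Xvar k hc G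
  have hsplit := Finset.card_filter_add_card_filter_not (s := F) (p := fun I => u ∈ I ∧ v ∈ I)
  have hkept := (hF.filter_not_both_mem hG').card_le_Xvar
  have hdropped := hF.card_filter_both_mem_le huv
  rw [← hFcard, ← hsplit]
  push_cast
  linarith [(Nat.cast_le (α := ℝ)).mpr hkept]

end

/-- `X` is `4μ₀`-Lipschitz with respect to single edge changes: if `G` and `G'` differ in
exactly one edge, then `|X(G) − X(G')| ≤ 4μ₀`. -/
theorem X_lipschitz (n k₀ : ℕ) (μ₀ : ℝ) (hμ₀ : 0 < μ₀)
    (G G' : SimpleGraph (Fin n)) (e : Sym2 (Fin n))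
    (h : symmDiff G.edgeSet G'.edgeSet = {e}) :
    |(Xvar n k₀ (4 * μ₀) G : ℝ) - (Xvar n k₀ (4 * μ₀) G' : ℝ)| ≤ 4 * μ₀ := by
  have hc : 0 ≤ 4 * μ₀ := by positivity
  have hGG' : G.edgeSet \ G'.edgeSet ⊆ {e} := h ▸ Set.symmDiff_def _ _ ▸ Set.subset_union_left
  have hG'G : G'.edgeSet \ G.edgeSet ⊆ {e} := h ▸ Set.symmDiff_def _ _ ▸ Set.subset_union_right
  have he : ¬e.IsDiag := by
    have : e ∈ symmDiff G.edgeSet G'.edgeSet := h ▸ rfl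
    rcases this with ⟨heG, -⟩ | ⟨heG', -⟩
    exacts [G.not_isDiag_of_mem_edgeSet heG, G'.not_isDiag_of_mem_edgeSet heG']
  induction e using Sym2.ind with
  | _ u v =>
  have huv : u ≠ v := by simpa using he
  rw [abs_sub_le_iff]
  constructor <;> linarith [Xvar_le_Xvar_add (k := k₀) hc huv hG'G,
    Xvar_le_Xvar_add (k := k₀) hc huv hGG']
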